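/- For integers m, n ≥ 1, let P be a coarsening of the column set of (m+2)P_n with |P| = k ≥ 2, and let F be a symmetric subset of P². If P contains a set X with (X,X) ∉ F, then the (P,F)-flip of (m+2)P_n contains a (k−1)-flipped mP_n as a pivot-minor. -/

import Mathlib

open SimpleGraph

universe u v

/-! ### Basic graph operations: flips, local complementation, pivoting, pivot-minors -/

/-- Flip the adjacency of `G` exactly at the pairs of distinct vertices where the
(symmetrized) predicate `p` holds. -/
def sdFlip {V : Type u} (G : SimpleGraph V) (p : V → V → Prop) : SimpleGraph V where
  Adj x y := x ≠ y ∧ Xor' (G.Adj x y) (p x y ∨ p y x)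
  symm := by
    constructor
    intro x y h
    refine ⟨h.1.symm, ?_⟩
    have h2 := h.2
    rwa [G.adj_comm x y, or_comm] at h2
  loopless := by
    constructor
    intro x h
    exact h.1 rfl

/-- Local complementation `G * v`: complement the adjacency inside the neighborhood of `v`. -/
def localComp {V : Type u} (G : SimpleGraph V) (v : V) : SimpleGraph V :=
  sdFlip G (fun x y => G.Adj v x ∧ G.Adj v y)

/-- Pivoting an edge `uv`: `G ∧ uv = G * u * v * u`. -/
def pivot {V : Type u} (G : SimpleGraph V) (u v : V) : SimpleGraph V :=
  localComp (localComp (localComp G u) v) u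

/-- Applying a sequence of pivots. -/
def pivotSeq {V : Type u} (G : SimpleGraph V) : List (V × V) → SimpleGraph V
  | [] => G
  | e :: l => pivotSeq (pivot G e.1 e.2) l

/-- Each pivot in the sequence is performed on an edge of the current graph. -/
def ValidPivots {V : Type u} (G : SimpleGraph V) : List (V × V) → Prop
  | [] => True
  | e :: l => G.Adj e.1 e.2 ∧ ValidPivots (pivot G e.1 e.2) l

/-- `H` is a pivot-minor of `G`: `H` is isomorphic to a graph obtained from `G` by a sequence of
pivotings (on edges of the current graph) and vertex deletions. -/
def IsPivotMinorOf {W : Type v} {V : Type u} (H : SimpleGraph W) (G : SimpleGraph V) : Prop :=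
  ∃ (l : List (V × V)) (S : Set V), ValidPivots G l ∧
    Nonempty (H ≃g (pivotSeq G l).induce S)

/-! ### The half-graph join `G △ H` -/

/-- `G △ H`: the disjoint union of `G` and `H` together with the half graph joining them:
the `i`-th vertex of `G` is adjacent to the `j`-th vertex of `H` iff `i ≥ j`. -/
def halfJoin {n : ℕ} (G H : SimpleGraph (Fin n)) : SimpleGraph (Fin n ⊕ Fin n) where
  Adj x y :=
    match x, y with
    | Sum.inl i, Sum.inl i' => G.Adj i i'
    | Sum.inr j, Sum.inr j' => H.Adj j j'
    | Sum.inl i, Sum.inr j => j ≤ i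
    | Sum.inr j, Sum.inl i => j ≤ i
  symm := by
    constructor
    rintro (i | i) (j | j) h
    · exact G.symm.symm _ _ h
    · exact h
    · exact h
    · exact H.symm.symm _ _ h
  loopless := by
    constructor
    rintro (i | i) h
    · exact G.loopless.irrefl i h
    · exact H.loopless.irrefl i h

/-! ### Flips by a set, by a pair of sets, and by a collection of sets -/

/-- The `X`-flip of `G`: complement the adjacency inside `X`. (The `∅`-flip is `G` itself.) -/
def setFlip {V : Type u} (G : SimpleGraph V) (X : Set V) : SimpleGraph V :=
  sdFlip G (fun x y => x ∈ X ∧ y ∈ X)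

/-- `G * (X, Y)`: complement the adjacency between `X` and `Y`. -/
def pairFlip {V : Type u} (G : SimpleGraph V) (X Y : Set V) : SimpleGraph V :=
  sdFlip G (fun x y => x ∈ X ∧ y ∈ Y)

open Classical in
/-- The member of the collection `P` containing `v`, if any, and `{v}` otherwise. -/
noncomputable def blockOf {V : Type u} (P : Set (Set V)) (v : V) : Set V :=
  if h : ∃ X ∈ P, v ∈ X then h.choose else {v}

/-- A subset `F ⊆ P²` is symmetric if `(X,X') ∈ F` implies `(X',X) ∈ F`. -/
def SymmRelSet {α : Type u} (F : Set (α × α)) : Prop :=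
  ∀ a b : α, (a, b) ∈ F → (b, a) ∈ F

/-- The `(P,F)`-flip `H ⊕ (P,F)` of `H`: distinct vertices `u,v` are adjacent iff
`H.Adj u v` XOR `(P(u), P(v)) ∈ F`. -/
noncomputable def collFlip {V : Type u} (H : SimpleGraph V) (P : Set (Set V))
    (F : Set (Set V × Set V)) : SimpleGraph V :=
  sdFlip H (fun x y => (blockOf P x, blockOf P y) ∈ F)

/-- `P` is a collection of pairwise disjoint non-empty subsets. -/
def IsDisjNonemptyColl {V : Type u} (P : Set (Set V)) : Prop :=
  (∀ X ∈ P, X.Nonempty) ∧ P.PairwiseDisjoint id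

/-- `Q` is a coarsening of `P`: a collection of disjoint non-empty sets,
each a union of members of `P`. -/
def IsCoarsening {α : Type u} (Q P : Set (Set α)) : Prop :=
  IsDisjNonemptyColl Q ∧ ∀ X ∈ Q, ∃ C ⊆ P, X = ⋃₀ C

/-! ### The graph `mPₙ` and flipped `mPₙ`'s -/

/-- `mPₙ`: the disjoint union of `m` copies of the path `Pₙ`, with vertex set `[m] × [n]`. -/
def pathsGraph (m n : ℕ) : SimpleGraph (Fin m × Fin n) where
  Adj x y := x.1 = y.1 ∧ (pathGraph n).Adj x.2 y.2
  symm := by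
    constructor
    rintro ⟨i, a⟩ ⟨j, b⟩ ⟨h1, h2⟩
    exact ⟨h1.symm, (pathGraph n).symm.symm _ _ h2⟩
  loopless := by
    constructor
    rintro ⟨i, a⟩ ⟨_, h⟩
    exact (pathGraph n).loopless.irrefl a h

/-- The `j`-th column of `mPₙ`. -/
def column (m n : ℕ) (j : Fin n) : Set (Fin m × Fin n) := {p | p.2 = j}

/-- The column set of `mPₙ`. -/
def columnSet (m n : ℕ) : Set (Set (Fin m × Fin n)) := Set.range (column m n)

/-- A flipped `mPₙ`: a `P`-flip of `mPₙ` where `P` is a coarsening of the column set. -/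
def IsFlippedPaths (m n : ℕ) (G : SimpleGraph (Fin m × Fin n)) : Prop :=
  ∃ (P : Set (Set (Fin m × Fin n))) (F : Set (Set (Fin m × Fin n) × Set (Fin m × Fin n))),
    IsCoarsening P (columnSet m n) ∧ F ⊆ P ×ˢ P ∧ SymmRelSet F ∧
    G = collFlip (pathsGraph m n) P F

/-- A `k`-flipped `mPₙ`: a flipped `mPₙ` with `|P| ≤ k`. -/
def IsKFlippedPaths (k m n : ℕ) (G : SimpleGraph (Fin m × Fin n)) : Prop :=
  ∃ (P : Set (Set (Fin m × Fin n))) (F : Set (Set (Fin m × Fin n) × Set (Fin m × Fin n))),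
    IsCoarsening P (columnSet m n) ∧ P.ncard ≤ k ∧ F ⊆ P ×ˢ P ∧ SymmRelSet F ∧
    G = collFlip (pathsGraph m n) P F

/-! ### Cut-rank and rank-depth -/

open Classical in
/-- The cut-rank `ρ_G(S)`: the rank over GF(2) of the `S × (V ∖ S)` submatrix of the
adjacency matrix of `G`. -/
noncomputable def cutRank {V : Type u} [Fintype V] (G : SimpleGraph V) (S : Set V) : ℕ :=
  Matrix.rank (Matrix.of fun (i : S) (j : (Sᶜ : Set V)) =>
    if G.Adj (i : V) (j : V) then (1 : ZMod 2) else 0)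

/-- The rank-depth of `G`: the least `k` such that `G` has a decomposition `(T, σ)` into a
tree `T` with the vertices of `G` identified with the leaves of `T` via `σ`, of width at
most `k` and radius at most `k`.  The width condition is expressed as: for every non-leaf
node `v` of `T` and every set `S ⊆ V(G)` that is a union of parts of the partition of `V(G)`
induced by the components of `T - v`, we have `ρ_G(S) ≤ k`. -/
noncomputable def rankDepth {V : Type u} [Fintype V] (G : SimpleGraph V) : ℕ :=
  sInf {k : ℕ |
    ∃ (N : ℕ) (T : SimpleGraph (Fin N))
      (σ : V ≃ {x : Fin N // (T.neighborSet x).ncard ≤ 1}),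
      T.IsTree ∧
      (∃ c : Fin N, ∀ x : Fin N, T.dist c x ≤ k) ∧
      (∀ x : Fin N, 1 < (T.neighborSet x).ncard →
        ∀ S : Set V,
          (∀ a b : V, a ∈ S →
            (∃ w : T.Walk ((σ a : {x : Fin N // (T.neighborSet x).ncard ≤ 1}) : Fin N)
                ((σ b : {x : Fin N // (T.neighborSet x).ncard ≤ 1}) : Fin N),
              x ∉ w.support) → b ∈ S) →
          cutRank G S ≤ k)}

/-! ### Restrictions of collections, and the sets `C_F`, `L_F`, `R_F`, `D_F` -/

/-- The restriction `P|_{S}` of a collection of subsets of `V` to a subset `S`. -/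
def restrictColl {V : Type u} (P : Set (Set V)) (S : Set V) : Set (Set S) :=
  {Y | ∃ X ∈ P, (Subtype.val ⁻¹' X : Set S).Nonempty ∧ Y = (Subtype.val ⁻¹' X : Set S)}

/-- The restriction `F|_{S}` of a collection of pairs of subsets of `V` to a subset `S`. -/
def restrictF {V : Type u} (F : Set (Set V × Set V)) (S : Set V) : Set (Set S × Set S) :=
  {q | ∃ p ∈ F, (Subtype.val ⁻¹' p.1 : Set S).Nonempty ∧ (Subtype.val ⁻¹' p.2 : Set S).Nonempty ∧
      q = ((Subtype.val ⁻¹' p.1 : Set S), (Subtype.val ⁻¹' p.2 : Set S))}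

/-- `C_F(X,X') = {Y ∈ P : (X,Y) ∈ F and (X',Y) ∈ F}`. -/
def CF {V : Type u} (P : Set (Set V)) (F : Set (Set V × Set V)) (X X' : Set V) : Set (Set V) :=
  {Y ∈ P | (X, Y) ∈ F ∧ (X', Y) ∈ F}

/-- `L_F(X,X') = {Y ∈ P : (X,Y) ∈ F and (X',Y) ∉ F}`. -/
def LF {V : Type u} (P : Set (Set V)) (F : Set (Set V × Set V)) (X X' : Set V) : Set (Set V) :=
  {Y ∈ P | (X, Y) ∈ F ∧ (X', Y) ∉ F}

/-- `R_F(X,X') = {Y ∈ P : (X,Y) ∉ F and (X',Y) ∈ F}`. -/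
def RF {V : Type u} (P : Set (Set V)) (F : Set (Set V × Set V)) (X X' : Set V) : Set (Set V) :=
  {Y ∈ P | (X, Y) ∉ F ∧ (X', Y) ∈ F}

/-- `D_F(X,X') = (C×L) ∪ (C×R) ∪ (L×R) ∪ (L×C) ∪ (R×C) ∪ (R×L)`. -/
def DF {V : Type u} (P : Set (Set V)) (F : Set (Set V × Set V)) (X X' : Set V) :
    Set (Set V × Set V) :=
  (CF P F X X' ×ˢ LF P F X X') ∪ (CF P F X X' ×ˢ RF P F X X') ∪ (LF P F X X' ×ˢ RF P F X X') ∪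
  (LF P F X X' ×ˢ CF P F X X') ∪ (RF P F X X' ×ˢ CF P F X X') ∪ (RF P F X X' ×ˢ LF P F X X')

/-- The set of `t` consecutive vertices of the path `P_s` starting at position `i` (0-indexed). -/
def consec (s i t : ℕ) : Set (Fin s) := {x | i ≤ (x : ℕ) ∧ (x : ℕ) < i + t}

/-- An `(s,t)`-path: a graph isomorphic to the `X`-flip of `P_s` for a set `X` of `t`
consecutive vertices of `P_s`. -/
def IsSTPath (s t : ℕ) {W : Type v} (G : SimpleGraph W) : Prop :=
  ∃ i : ℕ, i + t ≤ s ∧ Nonempty (G ≃g setFlip (pathGraph s) (consec s i t))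

/-!
If `X` is related by `F` to no block, deleting the last two paths leaves a flip of `mPₙ` by
the blocks other than `X`. Otherwise pick `X'` with `(X, X') ∈ F` and vertices `u ∈ X`,
`v ∈ X'` on the last two paths. Then `uv` is an edge, and pivoting it toggles the adjacency
between the other vertices exactly on the pairs of blocks in `D_F(X, X')`. As `(X, X) ∉ F` and
`(X', X) ∈ F`, the block `X` lies in `R_F(X, X')`, so `F ∆ D_F(X, X')` no longer involves `X`,
and deleting the last two paths leaves a flip of `mPₙ` by at most `k - 1` blocks.
-/

open scoped symmDiff

theorem sdFlip_adj {V : Type u} {G : SimpleGraph V} {p : V → V → Prop} {x y : V} :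
    (sdFlip G p).Adj x y ↔ x ≠ y ∧ Xor (G.Adj x y) (p x y ∨ p y x) :=
  Iff.rfl

theorem pivot_adj {V : Type u} {G : SimpleGraph V} {u v x y : V} (huv : G.Adj u v)
    (hxu : x ≠ u) (hxv : x ≠ v) (hyu : y ≠ u) (hyv : y ≠ v) :
    (pivot G u v).Adj x y ↔ x ≠ y ∧ Xor (G.Adj x y)
      ((G.Adj u x ∨ G.Adj v x) ∧ (G.Adj u y ∨ G.Adj v y) ∧
        ¬((G.Adj u x ↔ G.Adj u y) ∧ (G.Adj v x ↔ G.Adj v y))) := by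
  simp only [pivot, localComp, sdFlip_adj, ne_eq, G.adj_comm v u, huv, huv.ne.symm, hxu.symm,
    hxv.symm, hyu.symm, hyv.symm, G.loopless.irrefl, not_false_eq_true, true_and, and_true,
    false_and, and_false, or_false, or_self, Xor]
  by_cases e : G.Adj x y <;> by_cases a : G.Adj u x <;> by_cases b : G.Adj v x <;>
    by_cases c : G.Adj u y <;> by_cases d : G.Adj v y <;> by_cases hxy : x = y <;>
    simp_all

theorem mem_blockOf {V : Type u} (P : Set (Set V)) (x : V) : x ∈ blockOf P x := by
  unfold blockOf
  split_ifs with h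
  · exact h.choose_spec.2
  · rfl

theorem blockOf_eq_of_mem {V : Type u} {P : Set (Set V)} (hP : P.PairwiseDisjoint id)
    {B : Set V} {x : V} (hB : B ∈ P) (hx : x ∈ B) : blockOf P x = B := by
  have h : ∃ X ∈ P, x ∈ X := ⟨B, hB, hx⟩
  rw [blockOf, dif_pos h]
  by_contra hne
  exact Set.disjoint_left.mp (hP h.choose_spec.1 hB hne) h.choose_spec.2 hx

theorem collFlip_adj {V : Type u} {H : SimpleGraph V} {P : Set (Set V)}
    {F : Set (Set V × Set V)} (hF : SymmRelSet F) {x y : V} :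
    (collFlip H P F).Adj x y ↔
      x ≠ y ∧ Xor (H.Adj x y) ((blockOf P x, blockOf P y) ∈ F) := by
  rw [collFlip, sdFlip_adj, or_iff_left_of_imp (hF _ _)]

theorem IsCoarsening.exists_column_subset {M n : ℕ} {P : Set (Set (Fin M × Fin n))}
    (hP : IsCoarsening P (columnSet M n)) {B : Set (Fin M × Fin n)} (hB : B ∈ P) :
    ∃ j, column M n j ⊆ B := by
  obtain ⟨C, hC, rfl⟩ := hP.2 B hB
  obtain ⟨-, c, hc, -⟩ := hP.1.1 _ hB
  obtain ⟨j, rfl⟩ := hC hc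
  exact ⟨j, Set.subset_sUnion_of_mem hc⟩

theorem collFlip_pathsGraph_adj_of_fst_ne {M n : ℕ} {P : Set (Set (Fin M × Fin n))}
    {F : Set (Set (Fin M × Fin n) × Set (Fin M × Fin n))} (hF : SymmRelSet F)
    {x y : Fin M × Fin n} (hxy : x.1 ≠ y.1) :
    (collFlip (pathsGraph M n) P F).Adj x y ↔ (blockOf P x, blockOf P y) ∈ F := by
  have hpath : ¬(pathsGraph M n).Adj x y := fun h => hxy h.1
  have hne : x ≠ y := fun h => hxy (congrArg Prod.fst h)
  simp only [collFlip_adj hF, hpath, Xor, false_and, false_or, not_false_eq_true, and_true]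
  exact and_iff_right hne

def firstPaths {m M : ℕ} (h : m ≤ M) (n : ℕ) : Fin m × Fin n ↪ Fin M × Fin n :=
  (Fin.castLEEmb h).prodMap (Function.Embedding.refl _)

section firstPaths

variable {m M n : ℕ} (h : m ≤ M)

theorem firstPaths_fst_lt (x : Fin m × Fin n) : ((firstPaths h n x).1 : ℕ) < m := x.1.2

theorem preimage_firstPaths_column (j : Fin n) :
    firstPaths h n ⁻¹' column M n j = column m n j := rfl

theorem pathsGraph_adj_firstPaths {x y : Fin m × Fin n} :
    (pathsGraph M n).Adj (firstPaths h n x) (firstPaths h n y) ↔ (pathsGraph m n).Adj x y := by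
  simp [pathsGraph, firstPaths]

theorem comap_firstPaths_collFlip_adj {P : Set (Set (Fin M × Fin n))}
    {F : Set (Set (Fin M × Fin n) × Set (Fin M × Fin n))} (hF : SymmRelSet F)
    {x y : Fin m × Fin n} :
    ((collFlip (pathsGraph M n) P F).comap (firstPaths h n)).Adj x y ↔ x ≠ y ∧
      Xor ((pathsGraph m n).Adj x y)
        ((blockOf P (firstPaths h n x), blockOf P (firstPaths h n y)) ∈ F) := by
  rw [comap_adj, collFlip_adj hF, pathsGraph_adj_firstPaths, (firstPaths h n).injective.ne_iff]

end firstPaths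

theorem SymmRelSet.image_prodMap {α : Type u} {β : Type v} {F : Set (α × α)}
    (hF : SymmRelSet F) (g : α → β) : SymmRelSet (Prod.map g g '' F) := by
  rintro _ _ ⟨⟨a, b⟩, hab, hF'⟩
  simp only [Prod.map, Prod.mk.injEq] at hF'
  obtain ⟨rfl, rfl⟩ := hF'
  exact ⟨(b, a), hF _ _ hab, rfl⟩

section restriction

variable {m M n : ℕ} (h : m ≤ M) {P Q : Set (Set (Fin M × Fin n))}

theorem IsCoarsening.image_preimage_firstPaths (hm : 0 < m)
    (hP : IsCoarsening P (columnSet M n)) (hQ : Q ⊆ P) :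
    IsCoarsening ((firstPaths h n ⁻¹' ·) '' Q) (columnSet m n) := by
  refine ⟨⟨?_, ?_⟩, ?_⟩
  · rintro - ⟨B, hB, rfl⟩
    obtain ⟨j, hj⟩ := hP.exists_column_subset (hQ hB)
    exact ⟨(⟨0, hm⟩, j), hj rfl⟩
  · rintro - ⟨B₁, hB₁, rfl⟩ - ⟨B₂, hB₂, rfl⟩ hne
    exact (hP.1.2 (hQ hB₁) (hQ hB₂) fun h => hne (h ▸ rfl)).preimage _
  · rintro - ⟨B, hB, rfl⟩
    obtain ⟨C, hC, rfl⟩ := hP.2 B (hQ hB)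
    refine ⟨(firstPaths h n ⁻¹' ·) '' C, ?_, by
      simp only [Set.preimage_sUnion, Set.sUnion_image]⟩
    rintro - ⟨c, hc, rfl⟩
    obtain ⟨j, rfl⟩ := hC hc
    exact ⟨j, (preimage_firstPaths_column h j).symm⟩

/-- The witnessing blocks are the traces `firstPaths ⁻¹' B` of the blocks `B ∈ Q`. -/
theorem isKFlippedPaths_comap_firstPaths_collFlip (hm : 0 < m)
    (hP : IsCoarsening P (columnSet M n)) (hQ : Q ⊆ P)
    {F : Set (Set (Fin M × Fin n) × Set (Fin M × Fin n))} (hF : SymmRelSet F)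
    (hFQ : F ⊆ Q ×ˢ Q) :
    IsKFlippedPaths Q.ncard m n ((collFlip (pathsGraph M n) P F).comap (firstPaths h n)) := by
  set g : Set (Fin M × Fin n) → Set (Fin m × Fin n) := (firstPaths h n ⁻¹' ·)
  have hP' := hP.image_preimage_firstPaths h hm hQ
  have hblock : ∀ {x B}, B ∈ Q → firstPaths h n x ∈ B → blockOf (g '' Q) x = g B :=
    fun hB hx => blockOf_eq_of_mem hP'.1.2 ⟨_, hB, rfl⟩ hx
  have hmem : ∀ x y, (blockOf (g '' Q) x, blockOf (g '' Q) y) ∈ Prod.map g g '' F ↔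
      (blockOf P (firstPaths h n x), blockOf P (firstPaths h n y)) ∈ F := by
    intro x y
    constructor
    · rintro ⟨⟨B₁, B₂⟩, hB, hxy⟩
      obtain ⟨hB₁, hB₂⟩ := hFQ hB
      simp only [Prod.map, Prod.mk.injEq] at hxy
      have hx : x ∈ g B₁ := hxy.1 ▸ mem_blockOf _ x
      have hy : y ∈ g B₂ := hxy.2 ▸ mem_blockOf _ y
      rwa [blockOf_eq_of_mem hP.1.2 (hQ hB₁) hx, blockOf_eq_of_mem hP.1.2 (hQ hB₂) hy]
    · intro hxy
      obtain ⟨hx, hy⟩ := hFQ hxy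
      refine ⟨_, hxy, ?_⟩
      rw [Prod.map, hblock hx (mem_blockOf _ _), hblock hy (mem_blockOf _ _)]
  refine ⟨g '' Q, Prod.map g g '' F, hP', Set.ncard_image_le (Set.toFinite Q), ?_,
    hF.image_prodMap g, ?_⟩
  · rintro - ⟨B, hB, rfl⟩
    exact ⟨Set.mem_image_of_mem g (hFQ hB).1, Set.mem_image_of_mem g (hFQ hB).2⟩
  · ext x y
    rw [comap_firstPaths_collFlip_adj h hF, collFlip_adj (hF.image_prodMap g), hmem]

end restriction

theorem isPivotMinorOf_comap_pivotSeq {W : Type v} {V : Type u} (G : SimpleGraph V)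
    {l : List (V × V)} (hl : ValidPivots G l) (f : W ↪ V) :
    IsPivotMinorOf ((pivotSeq G l).comap f) G :=
  ⟨l, Set.range f, hl, ⟨(Embedding.comap f _).isoInduceRange⟩⟩

section DF

variable {V : Type u} {P : Set (Set V)} {F : Set (Set V × Set V)} {X X' : Set V}

/-- The toggle condition of `pivot_adj`, read on blocks. -/
theorem mem_DF_iff (hFP : F ⊆ P ×ˢ P) {B₁ B₂ : Set V} :
    (B₁, B₂) ∈ DF P F X X' ↔
      ((X, B₁) ∈ F ∨ (X', B₁) ∈ F) ∧ ((X, B₂) ∈ F ∨ (X', B₂) ∈ F) ∧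
        ¬(((X, B₁) ∈ F ↔ (X, B₂) ∈ F) ∧ ((X', B₁) ∈ F ↔ (X', B₂) ∈ F)) := by
  have h₁ : (X, B₁) ∈ F → B₁ ∈ P := fun h => (hFP h).2
  have h₂ : (X', B₁) ∈ F → B₁ ∈ P := fun h => (hFP h).2
  have h₃ : (X, B₂) ∈ F → B₂ ∈ P := fun h => (hFP h).2
  have h₄ : (X', B₂) ∈ F → B₂ ∈ P := fun h => (hFP h).2
  simp only [DF, CF, LF, RF, Set.mem_union, Set.mem_prod, Set.mem_ofPred_eq]
  by_cases (X, B₁) ∈ F <;> by_cases (X', B₁) ∈ F <;> by_cases (X, B₂) ∈ F <;>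
    by_cases (X', B₂) ∈ F <;> simp_all

theorem DF_subset_prod (hFP : F ⊆ P ×ˢ P) : DF P F X X' ⊆ P ×ˢ P := by
  rintro ⟨B₁, B₂⟩ hB
  rw [mem_DF_iff hFP] at hB
  exact ⟨hB.1.elim (fun h => (hFP h).2) (fun h => (hFP h).2),
    hB.2.1.elim (fun h => (hFP h).2) (fun h => (hFP h).2)⟩

theorem symmRelSet_symmDiff_DF (hFP : F ⊆ P ×ˢ P) (hF : SymmRelSet F) :
    SymmRelSet (F ∆ DF P F X X') := by
  intro B₁ B₂
  simp only [Set.mem_symmDiff, mem_DF_iff hFP]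
  have := hF B₁ B₂
  have := hF B₂ B₁
  tauto

theorem symmDiff_DF_subset (hFP : F ⊆ P ×ˢ P) (hF : SymmRelSet F) (hXX : (X, X) ∉ F)
    (hX'X : (X', X) ∈ F) : F ∆ DF P F X X' ⊆ (P \ {X}) ×ˢ (P \ {X}) := by
  rintro ⟨B₁, B₂⟩ hB
  have hP : B₁ ∈ P ∧ B₂ ∈ P :=
    hB.elim (fun h => hFP h.1) (fun h => DF_subset_prod hFP h.1)
  refine ⟨⟨hP.1, fun hB₁ => ?_⟩, ⟨hP.2, fun hB₂ => ?_⟩⟩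
  · rw [show B₁ = X from hB₁, Set.mem_symmDiff, mem_DF_iff hFP] at hB
    simp only [hXX, hX'X] at hB
    tauto
  · rw [show B₂ = X from hB₂, Set.mem_symmDiff, mem_DF_iff hFP] at hB
    simp only [hXX, hX'X] at hB
    have := hF B₁ X
    have := hF X B₁
    tauto

end DF

theorem and_xor_and_xor_assoc {a p q r : Prop} :
    (a ∧ Xor (a ∧ Xor p q) r) ↔ a ∧ Xor p (Xor q r) := by
  by_cases a <;> by_cases p <;> by_cases q <;> by_cases r <;> simp_all [Xor]

theorem comap_firstPaths_pivot_collFlip {m M n : ℕ} (h : m ≤ M)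
    {P : Set (Set (Fin M × Fin n))} {F : Set (Set (Fin M × Fin n) × Set (Fin M × Fin n))}
    (hFP : F ⊆ P ×ˢ P) (hF : SymmRelSet F) {u v : Fin M × Fin n}
    (huv : (collFlip (pathsGraph M n) P F).Adj u v) (hu : m ≤ (u.1 : ℕ))
    (hv : m ≤ (v.1 : ℕ)) :
    (pivot (collFlip (pathsGraph M n) P F) u v).comap (firstPaths h n) =
      (collFlip (pathsGraph M n) P (F ∆ DF P F (blockOf P u) (blockOf P v))).comap
        (firstPaths h n) := by
  have hfst : ∀ {w : Fin M × Fin n}, m ≤ (w.1 : ℕ) → ∀ z, w.1 ≠ (firstPaths h n z).1 :=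
    fun hw z hwz => (firstPaths_fst_lt h z).not_ge (hwz ▸ hw)
  have hne : ∀ {w : Fin M × Fin n}, m ≤ (w.1 : ℕ) → ∀ z, firstPaths h n z ≠ w :=
    fun hw z hwz => hfst hw z (congrArg Prod.fst hwz).symm
  ext x y
  rw [comap_firstPaths_collFlip_adj h (symmRelSet_symmDiff_DF hFP hF), comap_adj,
    pivot_adj huv (hne hu x) (hne hv x) (hne hu y) (hne hv y),
    collFlip_pathsGraph_adj_of_fst_ne hF (hfst hu x),
    collFlip_pathsGraph_adj_of_fst_ne hF (hfst hv x),
    collFlip_pathsGraph_adj_of_fst_ne hF (hfst hu y),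
    collFlip_pathsGraph_adj_of_fst_ne hF (hfst hv y), ← mem_DF_iff hFP, collFlip_adj hF,
    pathsGraph_adj_firstPaths, (firstPaths h n).injective.ne_iff]
  exact and_xor_and_xor_assoc

theorem stmt10_general (m n : ℕ) (hm : 1 ≤ m) (k : ℕ)
    (P : Set (Set (Fin (m + 2) × Fin n))) (hP : IsCoarsening P (columnSet (m + 2) n))
    (hPk : P.ncard = k)
    (F : Set (Set (Fin (m + 2) × Fin n) × Set (Fin (m + 2) × Fin n)))
    (hFP : F ⊆ P ×ˢ P) (hFsymm : SymmRelSet F)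
    (X : Set (Fin (m + 2) × Fin n)) (hX : X ∈ P) (hXX : (X, X) ∉ F) :
    ∃ G' : SimpleGraph (Fin m × Fin n), IsKFlippedPaths (k - 1) m n G' ∧
      IsPivotMinorOf G' (collFlip (pathsGraph (m + 2) n) P F) := by
  have hle : m ≤ m + 2 := Nat.le_add_right m 2
  have hcard : (P \ {X}).ncard = k - 1 := by rw [Set.ncard_sdiff_singleton_of_mem hX, hPk]
  by_cases hXF : ∀ B, (X, B) ∉ F
  · have hFQ : F ⊆ (P \ {X}) ×ˢ (P \ {X}) := fun B hB =>
      ⟨⟨(hFP hB).1, fun h => hXF B.2 (h ▸ hB)⟩,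
        ⟨(hFP hB).2, fun h => hXF B.1 (h ▸ hFsymm _ _ hB)⟩⟩
    exact ⟨_, hcard ▸ isKFlippedPaths_comap_firstPaths_collFlip hle hm hP Set.sdiff_subset
      hFsymm hFQ, isPivotMinorOf_comap_pivotSeq _ (l := []) trivial _⟩
  obtain ⟨X', hXX'⟩ := not_forall_not.mp hXF
  obtain ⟨j, hj⟩ := hP.exists_column_subset hX
  obtain ⟨j', hj'⟩ := hP.exists_column_subset (hFP hXX').2
  let u : Fin (m + 2) × Fin n := (⟨m, by omega⟩, j)
  let v : Fin (m + 2) × Fin n := (⟨m + 1, by omega⟩, j')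
  have hu : blockOf P u = X := blockOf_eq_of_mem hP.1.2 hX (hj rfl)
  have hv : blockOf P v = X' := blockOf_eq_of_mem hP.1.2 (hFP hXX').2 (hj' rfl)
  have huv : (collFlip (pathsGraph (m + 2) n) P F).Adj u v := by
    rw [collFlip_pathsGraph_adj_of_fst_ne hFsymm (by simp [u, v]), hu, hv]
    exact hXX'
  refine ⟨_, hcard ▸ isKFlippedPaths_comap_firstPaths_collFlip hle hm hP Set.sdiff_subset
    (symmRelSet_symmDiff_DF hFP hFsymm) (symmDiff_DF_subset hFP hFsymm hXX (hFsymm _ _ hXX')), ?_⟩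
  rw [← hu, ← hv, ← comap_firstPaths_pivot_collFlip hle hFP hFsymm huv le_rfl (Nat.le_succ m)]
  exact isPivotMinorOf_comap_pivotSeq _ (l := [(u, v)]) ⟨huv, trivial⟩ _

theorem stmt10 (m n : ℕ) (hm : 1 ≤ m) (hn : 1 ≤ n) (k : ℕ) (hk : 2 ≤ k)
    (P : Set (Set (Fin (m + 2) × Fin n))) (hP : IsCoarsening P (columnSet (m + 2) n))
    (hPk : P.ncard = k)
    (F : Set (Set (Fin (m + 2) × Fin n) × Set (Fin (m + 2) × Fin n)))
    (hFP : F ⊆ P ×ˢ P) (hFsymm : SymmRelSet F)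
    (X : Set (Fin (m + 2) × Fin n)) (hX : X ∈ P) (hXX : (X, X) ∉ F) :
    ∃ G' : SimpleGraph (Fin m × Fin n), IsKFlippedPaths (k - 1) m n G' ∧
      IsPivotMinorOf G' (collFlip (pathsGraph (m + 2) n) P F) :=
  stmt10_general m n hm k P hP hPk F hFP hFsymm X hX hXX
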